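/- arXiv:1001.1797 — 7 statements merged into one kernel-verified Lean document; each statement's English description precedes it below -/
import Mathlib

section
/- The comultiplication Δ_C and counit ε_C satisfy the counit laws: (ε_C ⊗ id_A) ∘ Δ_C = id_A = (id_A ⊗ ε_C) ∘ Δ_C, under the canonical identifications R ⊗_R A ≅ A ≅ A ⊗_R R. -/
/-! `A` is free on `1, X`, so both composites are determined by their values at `1` and `X`,
where `ε(1) = 0` and `ε(X) = 1` reduce them to `1` and `X`. -/

open TensorProduct Polynomial

noncomputable section

variable {R : Type*} [CommRing R]

/-- The algebra `A = R[X]/(X² - h·X - a)`. -/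
abbrev FrobA (a h : R) : Type _ := AdjoinRoot (X ^ 2 - C h * X - C a)

/-- The image of the variable `X` in `A`. -/
abbrev FrobX (a h : R) : FrobA a h := AdjoinRoot.root _

theorem AdjoinRoot.linearMap_ext_of_monic {M : Type*} [AddCommMonoid M] [Module R M]
    {g : R[X]} (hg : g.Monic) {f₁ f₂ : AdjoinRoot g →ₗ[R] M}
    (h : ∀ i < g.natDegree, f₁ (root g ^ i) = f₂ (root g ^ i)) : f₁ = f₂ :=
  (powerBasis' hg).basis.ext fun i => by
    simpa only [PowerBasis.basis_eq_pow, powerBasis'_gen] using h i i.isLt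

theorem monic_X_sq_sub_C_mul_X_sub_C (a h : R) : (X ^ 2 - C h * X - C a : R[X]).Monic := by
  monicity!

theorem natDegree_X_sq_sub_C_mul_X_sub_C_le (a h : R) :
    (X ^ 2 - C h * X - C a : R[X]).natDegree ≤ 2 := by
  compute_degree

theorem FrobA.linearMap_ext {M : Type*} [AddCommMonoid M] [Module R M] {a h : R}
    {f₁ f₂ : FrobA a h →ₗ[R] M} (h₁ : f₁ 1 = f₂ 1) (hX : f₁ (FrobX a h) = f₂ (FrobX a h)) :
    f₁ = f₂ := by
  refine AdjoinRoot.linearMap_ext_of_monic (monic_X_sq_sub_C_mul_X_sub_C a h) fun i hi => ?_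
  obtain rfl | rfl : i = 0 ∨ i = 1 := by
    have := natDegree_X_sq_sub_C_mul_X_sub_C_le a h; omega
  · simpa only [pow_zero] using h₁
  · simpa only [pow_one] using hX

/-- the counit laws for `Δ_C` and `ε_C`. -/
theorem counit_laws (a h : R)
    (ΔC : FrobA a h →ₗ[R] FrobA a h ⊗[R] FrobA a h)
    (hΔ1 : ΔC 1 = (1 : FrobA a h) ⊗ₜ[R] FrobX a h + FrobX a h ⊗ₜ[R] (1 : FrobA a h)
      - h • ((1 : FrobA a h) ⊗ₜ[R] (1 : FrobA a h)))
    (hΔX : ΔC (FrobX a h) = FrobX a h ⊗ₜ[R] FrobX a h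
      + a • ((1 : FrobA a h) ⊗ₜ[R] (1 : FrobA a h)))
    (εC : FrobA a h →ₗ[R] R)
    (hε1 : εC 1 = 0) (hεX : εC (FrobX a h) = 1) :
    (TensorProduct.lid R (FrobA a h)).toLinearMap ∘ₗ
        TensorProduct.map εC LinearMap.id ∘ₗ ΔC = LinearMap.id ∧
    (TensorProduct.rid R (FrobA a h)).toLinearMap ∘ₗ
        TensorProduct.map LinearMap.id εC ∘ₗ ΔC = LinearMap.id := by
  constructor <;> apply FrobA.linearMap_ext <;>
    simp [hΔ1, hΔX, hε1, hεX]

end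
end

section
/- The Frobenius compatibility law holds for (A, m, Δ_C): (m ⊗ id_A) ∘ (id_A ⊗ Δ_C) = Δ_C ∘ m = (id_A ⊗ m) ∘ (Δ_C ⊗ id_A) as R-linear maps A ⊗_R A → A ⊗_R A; hence A_C = (A, m, 1, Δ_C, ε_C) is a commutative Frobenius algebra over R. -/
open TensorProduct Polynomial

noncomputable section

variable {R : Type*} [CommRing R]

lemma frob_monic (a h : R) : (X ^ 2 - C h * X - C a).Monic := by
  monicity!

lemma frob_natDegree (a h : R) [Nontrivial R] :
    (X ^ 2 - C h * X - C a).natDegree = 2 := by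
  compute_degree!

lemma frobX_sq (a h : R) :
    FrobX a h * FrobX a h = h • FrobX a h + a • (1 : FrobA a h) := by
  have h0 : (AdjoinRoot.mk (X ^ 2 - C h * X - C a)) (X ^ 2 - C h * X - C a) = 0 :=
    AdjoinRoot.mk_self
  simp only [map_sub, map_pow, map_mul, AdjoinRoot.mk_X, AdjoinRoot.mk_C] at h0
  rw [← sq]
  simp only [Algebra.smul_def, AdjoinRoot.algebraMap_eq, smul_eq_mul]
  linear_combination h0

lemma frob_ext (a h : R) {M : Type*} [AddCommMonoid M] [Module R M]
    {f g : FrobA a h ⊗[R] FrobA a h →ₗ[R] M}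
    (h11 : f (1 ⊗ₜ 1) = g (1 ⊗ₜ 1))
    (h1X : f (1 ⊗ₜ FrobX a h) = g (1 ⊗ₜ FrobX a h))
    (hX1 : f (FrobX a h ⊗ₜ 1) = g (FrobX a h ⊗ₜ 1))
    (hXX : f (FrobX a h ⊗ₜ FrobX a h) = g (FrobX a h ⊗ₜ FrobX a h)) : f = g := by
  rcases subsingleton_or_nontrivial R with hR | hR
  · have : Subsingleton M := Module.subsingleton R M
    exact Subsingleton.elim f g
  set pb := AdjoinRoot.powerBasis' (frob_monic a h) with hpb
  have hdim : pb.dim = 2 := frob_natDegree a h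
  apply (pb.basis.tensorProduct pb.basis).ext
  rintro ⟨⟨i, hi⟩, ⟨j, hj⟩⟩
  rw [hdim] at hi hj
  simp only [Module.Basis.tensorProduct_apply, PowerBasis.coe_basis, AdjoinRoot.powerBasis'_gen]
  interval_cases i <;> interval_cases j <;>
    simpa [pow_succ, pow_zero] using (by assumption : _)

/-- the Frobenius compatibility law for `(A, m, Δ_C)`. -/
theorem frobenius_law (a h : R)
    (ΔC : FrobA a h →ₗ[R] FrobA a h ⊗[R] FrobA a h)
    (hΔ1 : ΔC 1 = (1 : FrobA a h) ⊗ₜ[R] FrobX a h + FrobX a h ⊗ₜ[R] (1 : FrobA a h)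
      - h • ((1 : FrobA a h) ⊗ₜ[R] (1 : FrobA a h)))
    (hΔX : ΔC (FrobX a h) = FrobX a h ⊗ₜ[R] FrobX a h
      + a • ((1 : FrobA a h) ⊗ₜ[R] (1 : FrobA a h)))
    (εC : FrobA a h →ₗ[R] R)
    (hε1 : εC 1 = 0) (hεX : εC (FrobX a h) = 1) :
    TensorProduct.map (LinearMap.mul' R (FrobA a h)) LinearMap.id ∘ₗ
        (TensorProduct.assoc R (FrobA a h) (FrobA a h) (FrobA a h)).symm.toLinearMap ∘ₗ
        TensorProduct.map LinearMap.id ΔC =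
      ΔC ∘ₗ LinearMap.mul' R (FrobA a h) ∧
    ΔC ∘ₗ LinearMap.mul' R (FrobA a h) =
      TensorProduct.map LinearMap.id (LinearMap.mul' R (FrobA a h)) ∘ₗ
        (TensorProduct.assoc R (FrobA a h) (FrobA a h) (FrobA a h)).toLinearMap ∘ₗ
        TensorProduct.map ΔC LinearMap.id := by
  have hsq := frobX_sq a h
  constructor <;>
  · apply frob_ext a h <;>
    · simp only [LinearMap.comp_apply, TensorProduct.map_tmul, LinearMap.id_coe, id_eq,
        LinearMap.mul'_apply, hΔ1, hΔX, hsq, tmul_add, tmul_sub, add_tmul, sub_tmul,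
        tmul_smul, ← smul_tmul', map_add, map_sub, map_smul, one_mul, mul_one,
        LinearEquiv.coe_coe, TensorProduct.assoc_tmul, TensorProduct.assoc_symm_tmul,
        smul_add, smul_sub]
      try module

end
end

section
/- The twisted structure maps Δ_W and ε_W make A a commutative Frobenius algebra: the counit laws (ε_W ⊗ id_A) ∘ Δ_W = id_A = (id_A ⊗ ε_W) ∘ Δ_W hold, Δ_W is coassociative, and the Frobenius law (m ⊗ id_A) ∘ (id_A ⊗ Δ_W) = Δ_W ∘ m = (id_A ⊗ m) ∘ (Δ_W ⊗ id_A) holds; hence A_W = (A, m, 1, Δ_W, ε_W) is a commutative Frobenius algebra over R. -/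
/-!
Over `A = R[X]/(X² - hX - a)` the map `Δ_C` is a map of `A`-bimodules,
`Δ_C(x) = (x ⊗ 1)·Δ_C(1) = (1 ⊗ x)·Δ_C(1)`; on the basis vector `X` this is the relation
`X² = hX + a`. Bimodule maps are exactly the comultiplications satisfying the Frobenius law, and
this property survives scaling by `i`. Coassociativity of `Δ_C` is a computation on `{1, X}`, and
it is preserved by scaling since both sides are quadratic in `Δ`. The twist is what fixes the counit:
`(ε_W ⊗ id)(i·Δ_C(1)) = i·ε_W(X)·1 = -i²·1 = 1`, and similarly on `X`.
-/

open TensorProduct Polynomial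

noncomputable section

variable {R : Type*} [CommRing R]

section FrobeniusLaw

variable {K A : Type*} [CommSemiring K] [CommSemiring A] [Algebra K A]

lemma map_mul'_id_assoc_symm_tmul (x : A) (t : A ⊗[K] A) :
    map (LinearMap.mul' K A) LinearMap.id ((TensorProduct.assoc K A A A).symm (x ⊗ₜ t)) =
      (x ⊗ₜ 1) * t := by
  induction t with
  | zero => simp
  | tmul y z => simp
  | add s t hs ht => simp only [tmul_add, map_add, hs, ht, mul_add]

lemma map_id_mul'_assoc_tmul (t : A ⊗[K] A) (y : A) :
    map LinearMap.id (LinearMap.mul' K A) (TensorProduct.assoc K A A A (t ⊗ₜ y)) =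
      t * (1 ⊗ₜ y) := by
  induction t with
  | zero => simp
  | tmul x z => simp
  | add s t hs ht => simp only [add_tmul, map_add, hs, ht, add_mul]

lemma frobenius_left_of_apply_eq_mul {Δ : A →ₗ[K] A ⊗[K] A}
    (hΔ : ∀ x, Δ x = (x ⊗ₜ 1) * Δ 1) :
    map (LinearMap.mul' K A) LinearMap.id ∘ₗ (TensorProduct.assoc K A A A).symm.toLinearMap ∘ₗ
      map LinearMap.id Δ = Δ ∘ₗ LinearMap.mul' K A := by
  refine TensorProduct.ext' fun x y => ?_
  simp only [LinearMap.comp_apply, map_tmul, LinearMap.id_apply, LinearEquiv.coe_coe,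
    map_mul'_id_assoc_symm_tmul, LinearMap.mul'_apply]
  rw [hΔ y, hΔ (x * y), ← mul_assoc, Algebra.TensorProduct.tmul_mul_tmul, one_mul]

lemma frobenius_right_of_apply_eq_mul {Δ : A →ₗ[K] A ⊗[K] A}
    (hΔ : ∀ x, Δ x = (1 ⊗ₜ x) * Δ 1) :
    Δ ∘ₗ LinearMap.mul' K A = map LinearMap.id (LinearMap.mul' K A) ∘ₗ
      (TensorProduct.assoc K A A A).toLinearMap ∘ₗ map Δ LinearMap.id := by
  refine TensorProduct.ext' fun x y => ?_
  simp only [LinearMap.comp_apply, map_tmul, LinearMap.id_apply, LinearEquiv.coe_coe,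
    map_id_mul'_assoc_tmul, LinearMap.mul'_apply]
  rw [hΔ x, hΔ (x * y), mul_right_comm, Algebra.TensorProduct.tmul_mul_tmul, one_mul]

lemma coassoc_smul {Δ : A →ₗ[K] A ⊗[K] A} (c : K)
    (hΔ : (TensorProduct.assoc K A A A).toLinearMap ∘ₗ map Δ LinearMap.id ∘ₗ Δ =
      map LinearMap.id Δ ∘ₗ Δ) :
    (TensorProduct.assoc K A A A).toLinearMap ∘ₗ map (c • Δ) LinearMap.id ∘ₗ (c • Δ) =
      map LinearMap.id (c • Δ) ∘ₗ (c • Δ) := by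
  simp only [map_smul_left, map_smul_right, LinearMap.comp_smul, LinearMap.smul_comp, hΔ]

end FrobeniusLaw

namespace FrobA

lemma monic (a h : R) : (X ^ 2 - C h * X - C a : R[X]).Monic := by
  monicity!

lemma X_mul_X (a h : R) : FrobX a h * FrobX a h = h • FrobX a h + a • (1 : FrobA a h) := by
  have h0 := AdjoinRoot.eval₂_root (X ^ 2 - C h * X - C a : R[X])
  simp only [eval₂_sub, eval₂_X_pow, eval₂_mul, eval₂_C, eval₂_X, sub_eq_zero] at h0
  rw [← sq, Algebra.smul_def, Algebra.smul_def, mul_one, AdjoinRoot.algebraMap_eq]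
  linear_combination h0

variable {a h : R}

lemma linearMap_ext_s3 {M : Type*} [AddCommMonoid M] [Module R M] {f g : FrobA a h →ₗ[R] M}
    (h1 : f 1 = g 1) (hX : f (FrobX a h) = g (FrobX a h)) : f = g := by
  -- over the zero ring the power basis below is empty, since `natDegree` is then `0`
  rcases subsingleton_or_nontrivial R with _ | _
  · have := Module.subsingleton R M
    exact Subsingleton.elim f g
  · let B := AdjoinRoot.powerBasis' (monic a h)
    have hdim : B.dim = 2 := by
      rw [AdjoinRoot.powerBasis'_dim]
      compute_degree!
    refine B.basis.ext fun ⟨j, hj⟩ => ?_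
    rw [hdim] at hj
    interval_cases j
    · simpa [B] using h1
    · simpa [B] using hX

variable {ΔC : FrobA a h →ₗ[R] FrobA a h ⊗[R] FrobA a h}
  (hΔ1 : ΔC 1 = (1 : FrobA a h) ⊗ₜ[R] FrobX a h + FrobX a h ⊗ₜ[R] (1 : FrobA a h)
    - h • ((1 : FrobA a h) ⊗ₜ[R] (1 : FrobA a h)))
  (hΔX : ΔC (FrobX a h) = FrobX a h ⊗ₜ[R] FrobX a h
    + a • ((1 : FrobA a h) ⊗ₜ[R] (1 : FrobA a h)))
include hΔ1 hΔX

lemma comul_eq_tmul_one_mul (x : FrobA a h) : ΔC x = (x ⊗ₜ 1) * ΔC 1 := by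
  suffices ΔC = LinearMap.mulRight R (ΔC 1) ∘ₗ (TensorProduct.mk R _ _).flip 1 from
    congr($this x)
  refine linearMap_ext_s3 ?_ ?_
  · simp [← Algebra.TensorProduct.one_def]
  · simp only [LinearMap.comp_apply, LinearMap.flip_apply, mk_apply, LinearMap.mulRight_apply,
      hΔ1, hΔX, mul_add, mul_sub, mul_smul_comm, Algebra.TensorProduct.tmul_mul_tmul, mul_one,
      one_mul, X_mul_X, add_tmul, smul_tmul']
    abel

lemma comul_eq_one_tmul_mul (x : FrobA a h) : ΔC x = (1 ⊗ₜ x) * ΔC 1 := by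
  suffices ΔC = LinearMap.mulRight R (ΔC 1) ∘ₗ TensorProduct.mk R _ _ 1 from congr($this x)
  refine linearMap_ext_s3 ?_ ?_
  · simp [← Algebra.TensorProduct.one_def]
  · simp only [LinearMap.comp_apply, mk_apply, LinearMap.mulRight_apply,
      hΔ1, hΔX, mul_add, mul_sub, mul_smul_comm, Algebra.TensorProduct.tmul_mul_tmul, mul_one,
      one_mul, X_mul_X, tmul_add, tmul_smul]
    abel

lemma comul_coassoc :
    (TensorProduct.assoc R _ _ _).toLinearMap ∘ₗ map ΔC LinearMap.id ∘ₗ ΔC =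
      map LinearMap.id ΔC ∘ₗ ΔC := by
  refine linearMap_ext_s3 ?_ ?_ <;>
  · simp only [LinearMap.comp_apply, LinearEquiv.coe_coe, hΔ1, hΔX, map_add, map_sub, map_smul,
      map_tmul, LinearMap.id_apply, assoc_tmul, add_tmul, sub_tmul, tmul_add, tmul_sub,
      smul_add, smul_sub, TensorProduct.smul_tmul, tmul_smul, smul_smul]
    module

variable {i : R} (hi : i ^ 2 = -1) {εW : FrobA a h →ₗ[R] R} (hεW1 : εW 1 = 0)
  (hεWX : εW (FrobX a h) = -i)
include hi hεW1 hεWX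

lemma twisted_counit_left :
    (TensorProduct.lid R _).toLinearMap ∘ₗ map εW LinearMap.id ∘ₗ (i • ΔC) = LinearMap.id := by
  refine linearMap_ext_s3 ?_ ?_ <;>
  · simp [hΔ1, hΔX, hεW1, hεWX, smul_smul, ← sq, hi]

lemma twisted_counit_right :
    (TensorProduct.rid R _).toLinearMap ∘ₗ map LinearMap.id εW ∘ₗ (i • ΔC) = LinearMap.id := by
  refine linearMap_ext_s3 ?_ ?_ <;>
  · simp [hΔ1, hΔX, hεW1, hεWX, smul_smul, ← sq, hi]

end FrobA

/-- the twisted structure maps `Δ_W = i•Δ_C` and `ε_W` satisfy the counit laws,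
coassociativity, and the Frobenius law. -/
theorem twisted_frobenius (a h i : R) (hi : i ^ 2 = -1)
    (ΔC : FrobA a h →ₗ[R] FrobA a h ⊗[R] FrobA a h)
    (hΔ1 : ΔC 1 = (1 : FrobA a h) ⊗ₜ[R] FrobX a h + FrobX a h ⊗ₜ[R] (1 : FrobA a h)
      - h • ((1 : FrobA a h) ⊗ₜ[R] (1 : FrobA a h)))
    (hΔX : ΔC (FrobX a h) = FrobX a h ⊗ₜ[R] FrobX a h
      + a • ((1 : FrobA a h) ⊗ₜ[R] (1 : FrobA a h)))
    (εW : FrobA a h →ₗ[R] R)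
    (hεW1 : εW 1 = 0) (hεWX : εW (FrobX a h) = -i) :
    ((TensorProduct.lid R (FrobA a h)).toLinearMap ∘ₗ
        TensorProduct.map εW LinearMap.id ∘ₗ (i • ΔC) = LinearMap.id ∧
      (TensorProduct.rid R (FrobA a h)).toLinearMap ∘ₗ
        TensorProduct.map LinearMap.id εW ∘ₗ (i • ΔC) = LinearMap.id) ∧
    ((TensorProduct.assoc R (FrobA a h) (FrobA a h) (FrobA a h)).toLinearMap ∘ₗ
        TensorProduct.map (i • ΔC) LinearMap.id ∘ₗ (i • ΔC) =
      TensorProduct.map LinearMap.id (i • ΔC) ∘ₗ (i • ΔC)) ∧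
    (TensorProduct.map (LinearMap.mul' R (FrobA a h)) LinearMap.id ∘ₗ
        (TensorProduct.assoc R (FrobA a h) (FrobA a h) (FrobA a h)).symm.toLinearMap ∘ₗ
        TensorProduct.map LinearMap.id (i • ΔC) =
      (i • ΔC) ∘ₗ LinearMap.mul' R (FrobA a h) ∧
    (i • ΔC) ∘ₗ LinearMap.mul' R (FrobA a h) =
      TensorProduct.map LinearMap.id (LinearMap.mul' R (FrobA a h)) ∘ₗ
        (TensorProduct.assoc R (FrobA a h) (FrobA a h) (FrobA a h)).toLinearMap ∘ₗ
        TensorProduct.map (i • ΔC) LinearMap.id) := by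
  have twisted_comul_eq_tmul_one_mul (x : FrobA a h) : (i • ΔC) x = (x ⊗ₜ 1) * (i • ΔC) 1 := by
    simp only [LinearMap.smul_apply, FrobA.comul_eq_tmul_one_mul hΔ1 hΔX x, mul_smul_comm]
  have twisted_comul_eq_one_tmul_mul (x : FrobA a h) : (i • ΔC) x = (1 ⊗ₜ x) * (i • ΔC) 1 := by
    simp only [LinearMap.smul_apply, FrobA.comul_eq_one_tmul_mul hΔ1 hΔX x, mul_smul_comm]
  exact ⟨⟨FrobA.twisted_counit_left hΔ1 hΔX hi hεW1 hεWX,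
      FrobA.twisted_counit_right hΔ1 hΔX hi hεW1 hεWX⟩,
    coassoc_smul i (FrobA.comul_coassoc hΔ1 hΔX),
    frobenius_left_of_apply_eq_mul twisted_comul_eq_tmul_one_mul,
    frobenius_right_of_apply_eq_mul twisted_comul_eq_one_tmul_mul⟩

end
end

section
/- The duality axiom of an identical twin Frobenius algebra holds for both pairs (z₁, z₁*) and (z₂, z₂*): for all x, y ∈ A and for k = 1, 2, one has ε_C(x · z_k*(y)) = ε_W(z_k(x) · y). -/
/-! Both sides of the duality axiom are `R`-bilinear in `(x, y)`, so it suffices to compare them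
on the spanning set `{1, X}` of `A`, where they reduce to the relation `X² = h X + a`. -/

open TensorProduct Polynomial

noncomputable section

variable {R : Type*} [CommRing R]

theorem AdjoinRoot.span_one_root_eq_top {g : R[X]} (hg : g.Monic) (hdeg : g.natDegree ≤ 2) :
    Submodule.span R {1, root g} = ⊤ := by
  refine eq_top_mono (Submodule.span_mono ?_) (powerBasis' hg).basis.span_eq
  rintro _ ⟨⟨_ | _ | n, hn⟩, rfl⟩
  · simp
  · simp
  · exact absurd (hn.trans_le hdeg) (by simp)

theorem LinearMap.ext_span₂ {S M N P : Type*} [CommSemiring S] [AddCommMonoid M]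
    [AddCommMonoid N] [AddCommMonoid P] [Module S M] [Module S N] [Module S P] {s : Set M}
    {t : Set N} (hs : Submodule.span S s = ⊤) (ht : Submodule.span S t = ⊤)
    {B B' : M →ₗ[S] N →ₗ[S] P} (h : ∀ x ∈ s, ∀ y ∈ t, B x y = B' x y) : B = B' :=
  LinearMap.ext_on hs fun x hx => LinearMap.ext_on ht (h x hx)

theorem Submodule.map_mul_eq_map_mul_of_span_eq_top {S A M : Type*} [CommSemiring S] [Semiring A]
    [Algebra S A] [AddCommMonoid M] [Module S M] {s : Set A} (hs : Submodule.span S s = ⊤)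
    (ε ε' : A →ₗ[S] M) (z z' : A →ₗ[S] A) (h : ∀ x ∈ s, ∀ y ∈ s, ε (x * z' y) = ε' (z x * y))
    (x y : A) : ε (x * z' y) = ε' (z x * y) :=
  LinearMap.congr_fun₂ (LinearMap.ext_span₂ (B := ((LinearMap.mul S A).compl₂ z').compr₂ ε)
    (B' := (LinearMap.mul S A ∘ₗ z).compr₂ ε') hs hs h) x y

theorem FrobA.span_one_X (a h : R) : Submodule.span R {1, FrobX a h} = ⊤ :=
  AdjoinRoot.span_one_root_eq_top (by monicity!) (by compute_degree)

theorem FrobA.X_mul_X_s6 (a h : R) : FrobX a h * FrobX a h = h • FrobX a h + a • 1 := by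
  have hroot : AdjoinRoot.mk _ (X ^ 2 - C h * X - C a) = 0 := AdjoinRoot.mk_self
  simp only [map_sub, map_pow, map_mul, AdjoinRoot.mk_X, AdjoinRoot.mk_C] at hroot
  rw [Algebra.smul_def, Algebra.smul_def, mul_one, AdjoinRoot.algebraMap_eq]
  linear_combination hroot

theorem duality_axiom_general (a h i : R)
    (εC εW : FrobA a h →ₗ[R] R)
    (hεC1 : εC 1 = 0) (hεCX : εC (FrobX a h) = 1)
    (hεW1 : εW 1 = 0) (hεWX : εW (FrobX a h) = -i)
    (z1 z1s z2 z2s : FrobA a h →ₗ[R] FrobA a h)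
    (hz1 : z1 = LinearMap.id)
    (hz1s : ∀ x : FrobA a h, z1s x = (-i) • x)
    (hz21 : z2 1 = 1)
    (hz2X : z2 (FrobX a h) = algebraMap R (FrobA a h) h - FrobX a h)
    (hz2s1 : z2s 1 = i • (1 : FrobA a h))
    (hz2sX : z2s (FrobX a h) = i • (algebraMap R (FrobA a h) h - FrobX a h)) :
    (∀ x y : FrobA a h, εC (x * z1s y) = εW (z1 x * y)) ∧
    (∀ x y : FrobA a h, εC (x * z2s y) = εW (z2 x * y)) := by
  rw [Algebra.algebraMap_eq_smul_one] at hz2X hz2sX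
  constructor <;>
  · refine Submodule.map_mul_eq_map_mul_of_span_eq_top (FrobA.span_one_X a h) _ _ _ _ ?_
    rintro x (rfl | rfl) y (rfl | rfl) <;>
    simp [hz1, hz1s, hz21, hz2X, hz2s1, hz2sX, mul_sub, FrobA.X_mul_X_s6,
      hεC1, hεCX, hεW1, hεWX, mul_comm]

/-- the duality axiom `ε_C(x · z_k*(y)) = ε_W(z_k(x) · y)` for `k = 1, 2`. -/
theorem duality_axiom (a h i : R) (hi : i ^ 2 = -1)
    (εC εW : FrobA a h →ₗ[R] R)
    (hεC1 : εC 1 = 0) (hεCX : εC (FrobX a h) = 1)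
    (hεW1 : εW 1 = 0) (hεWX : εW (FrobX a h) = -i)
    (z1 z1s z2 z2s : FrobA a h →ₗ[R] FrobA a h)
    (hz1 : z1 = LinearMap.id)
    (hz1s : ∀ x : FrobA a h, z1s x = (-i) • x)
    (hz21 : z2 1 = 1)
    (hz2X : z2 (FrobX a h) = algebraMap R (FrobA a h) h - FrobX a h)
    (hz2s1 : z2s 1 = i • (1 : FrobA a h))
    (hz2sX : z2s (FrobX a h) = i • (algebraMap R (FrobA a h) h - FrobX a h)) :
    (∀ x y : FrobA a h, εC (x * z1s y) = εW (z1 x * y)) ∧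
    (∀ x y : FrobA a h, εC (x * z2s y) = εW (z2 x * y)) :=
  duality_axiom_general a h i εC εW hεC1 hεCX hεW1 hεWX z1 z1s z2 z2s hz1 hz1s hz21 hz2X hz2s1 hz2sX

end
end

section
/- The genus-one UFO relations of the dot-free sl(2) foam theory hold for the TQFT structure maps: ε_C(f(m(Δ_C(1)))) = −2i and ε_C(g(m(Δ_C(1)))) = 2i, where f = z₂* ∘ z₁ (so f(1) = i, f(X) = i·(h − X)) and g = z₁* ∘ z₂ (so g(1) = −i, g(X) = −i·(h − X)). -/
/-! Multiplying out gives `m(Δ_C(1)) = 2X - h`. Both `f` and `g` are `c • σ` for the conjugation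
`σ : X ↦ h - X` (with `c = i` and `c = -i`), so they send it to `c • (h - 2X)`, on which `ε_C`
takes the value `-2c`. -/

open TensorProduct Polynomial

noncomputable section

variable {R : Type*} [CommRing R]

section

variable {A : Type*} [Ring A] [Algebra R A]

theorem mul'_one_tmul_add_tmul_one_sub_smul (x : A) (h : R) :
    LinearMap.mul' R A (1 ⊗ₜ[R] x + x ⊗ₜ[R] 1 - h • ((1 : A) ⊗ₜ[R] (1 : A)))
      = (2 : R) • x - h • (1 : A) := by
  simp [two_smul]

theorem counit_apply_two_smul_sub {ε : A →ₗ[R] R} {x : A} (hε1 : ε 1 = 0) (hεx : ε x = 1)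
    {f : A →ₗ[R] A} {c h : R} (hf1 : f 1 = c • 1)
    (hfx : f x = c • (algebraMap R A h - x)) :
    ε (f ((2 : R) • x - h • 1)) = -(2 * c) := by
  simp only [map_sub, map_smul, hf1, hfx, Algebra.algebraMap_eq_smul_one, smul_sub, hε1, hεx,
    smul_eq_mul]
  ring

end

theorem ufo_relations_general (a h i : R)
    (ΔC : FrobA a h →ₗ[R] FrobA a h ⊗[R] FrobA a h)
    (hΔ1 : ΔC 1 = (1 : FrobA a h) ⊗ₜ[R] FrobX a h + FrobX a h ⊗ₜ[R] (1 : FrobA a h)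
      - h • ((1 : FrobA a h) ⊗ₜ[R] (1 : FrobA a h)))
    (εC : FrobA a h →ₗ[R] R)
    (hεC1 : εC 1 = 0) (hεCX : εC (FrobX a h) = 1)
    (z1 z1s z2 z2s : FrobA a h →ₗ[R] FrobA a h)
    (hz1 : z1 = LinearMap.id)
    (hz1s : ∀ x : FrobA a h, z1s x = (-i) • x)
    (hz21 : z2 1 = 1)
    (hz2X : z2 (FrobX a h) = algebraMap R (FrobA a h) h - FrobX a h)
    (hz2s1 : z2s 1 = i • (1 : FrobA a h))
    (hz2sX : z2s (FrobX a h) = i • (algebraMap R (FrobA a h) h - FrobX a h)) :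
    εC ((z2s ∘ₗ z1) (LinearMap.mul' R (FrobA a h) (ΔC 1))) = -(2 * i) ∧
    εC ((z1s ∘ₗ z2) (LinearMap.mul' R (FrobA a h) (ΔC 1))) = 2 * i := by
  rw [hΔ1, mul'_one_tmul_add_tmul_one_sub_smul]
  subst hz1
  constructor
  · exact counit_apply_two_smul_sub hεC1 hεCX hz2s1 hz2sX
  · have hg1 : (z1s ∘ₗ z2) 1 = (-i) • 1 := by
      rw [LinearMap.comp_apply, hz21, hz1s]
    have hgX : (z1s ∘ₗ z2) (FrobX a h) = (-i) • (algebraMap R _ h - FrobX a h) := by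
      rw [LinearMap.comp_apply, hz2X, hz1s]
    rw [counit_apply_two_smul_sub hεC1 hεCX hg1 hgX, mul_neg, neg_neg]

/-- the genus-one UFO relations `ε_C(f(m(Δ_C(1)))) = -2i` and
`ε_C(g(m(Δ_C(1)))) = 2i`, where `f = z₂* ∘ z₁` and `g = z₁* ∘ z₂`. -/
theorem ufo_relations (a h i : R) (hi : i ^ 2 = -1)
    (ΔC : FrobA a h →ₗ[R] FrobA a h ⊗[R] FrobA a h)
    (hΔ1 : ΔC 1 = (1 : FrobA a h) ⊗ₜ[R] FrobX a h + FrobX a h ⊗ₜ[R] (1 : FrobA a h)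
      - h • ((1 : FrobA a h) ⊗ₜ[R] (1 : FrobA a h)))
    (hΔX : ΔC (FrobX a h) = FrobX a h ⊗ₜ[R] FrobX a h
      + a • ((1 : FrobA a h) ⊗ₜ[R] (1 : FrobA a h)))
    (εC : FrobA a h →ₗ[R] R)
    (hεC1 : εC 1 = 0) (hεCX : εC (FrobX a h) = 1)
    (z1 z1s z2 z2s : FrobA a h →ₗ[R] FrobA a h)
    (hz1 : z1 = LinearMap.id)
    (hz1s : ∀ x : FrobA a h, z1s x = (-i) • x)
    (hz21 : z2 1 = 1)
    (hz2X : z2 (FrobX a h) = algebraMap R (FrobA a h) h - FrobX a h)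
    (hz2s1 : z2s 1 = i • (1 : FrobA a h))
    (hz2sX : z2s (FrobX a h) = i • (algebraMap R (FrobA a h) h - FrobX a h)) :
    εC ((z2s ∘ₗ z1) (LinearMap.mul' R (FrobA a h) (ΔC 1))) = -(2 * i) ∧
    εC ((z1s ∘ₗ z2) (LinearMap.mul' R (FrobA a h) (ΔC 1))) = 2 * i :=
  ufo_relations_general a h i ΔC hΔ1 εC hεC1 hεCX z1 z1s z2 z2s hz1 hz1s hz21 hz2X hz2s1 hz2sX

end
end

section
/- The cutting-neck relation (CN) of the dot-free sl(2) foam theory holds for the TQFT structure maps: for every x ∈ A, x = (i/2)·ε_C(m(Δ_C(z₁*(x))))·1 + (i/2)·ε_W(x)·z₁(m(Δ_C(1))); equivalently, id_A = (i/2)·[ι_W ∘ (ε_C ∘ m ∘ Δ_C ∘ z₁*)] + (i/2)·[(z₁ ∘ m ∘ Δ_C ∘ ι_C) ∘ ε_W], where ι_C = ι_W : R → A is the unit map. -/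
open TensorProduct Polynomial

noncomputable section

variable {R : Type*} [CommRing R]

/-!
Both sides of (CN) are `R`-linear in `x`, and `A` is spanned by `1` and `X`, so it suffices to
compare coefficients. With `m(Δ_C(1)) = 2X - h` and `m(Δ_C(X)) = X² + a = hX + 2a`, the element
`x = p + qX` is sent to `((2p + hq)/2)·1 + (q/2)·(2X - h) = p + qX`, using `i² = -1`.
-/

namespace AdjoinRoot

theorem root_sq_eq_of_quadratic (a h : R) :
    root (X ^ 2 - C h * X - C a) ^ 2 = h • root (X ^ 2 - C h * X - C a) + a • 1 := by
  have hroot := eval₂_root (X ^ 2 - C h * X - C a : R[X])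
  simp only [eval₂_sub, eval₂_pow, eval₂_X, eval₂_mul, eval₂_C] at hroot
  rw [Algebra.smul_def, Algebra.smul_def, mul_one, algebraMap_eq]
  linear_combination hroot

theorem exists_eq_smul_one_add_smul_root_of_quadratic (a h : R)
    (x : AdjoinRoot (X ^ 2 - C h * X - C a)) :
    ∃ p q : R, x = p • 1 + q • root (X ^ 2 - C h * X - C a) := by
  obtain ⟨f, rfl⟩ := mk_surjective x
  induction f using Polynomial.induction_on with
  | C r =>
    refine ⟨r, 0, ?_⟩
    rw [mk_C, zero_smul, add_zero, ← algebraMap_eq, Algebra.algebraMap_eq_smul_one]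
  | add f g hf hg =>
    obtain ⟨p, q, hpq⟩ := hf
    obtain ⟨p', q', hpq'⟩ := hg
    exact ⟨p + p', q + q', by rw [map_add, hpq, hpq']; module⟩
  | monomial n r ih =>
    obtain ⟨p, q, hpq⟩ := ih
    refine ⟨q * a, p + q * h, ?_⟩
    rw [pow_succ X n, ← mul_assoc, map_mul, hpq, mk_X, add_mul, smul_mul_assoc, smul_mul_assoc,
      one_mul, ← sq, root_sq_eq_of_quadratic]
    module

end AdjoinRoot

/-- the cutting-neck relation (CN):
`x = (i/2)·ε_C(m(Δ_C(z₁*(x))))·1 + (i/2)·ε_W(x)·z₁(m(Δ_C(1)))` for every `x ∈ A`. -/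
theorem cutting_neck (a h i : R) [Invertible (2 : R)] (hi : i ^ 2 = -1)
    (ΔC : FrobA a h →ₗ[R] FrobA a h ⊗[R] FrobA a h)
    (hΔ1 : ΔC 1 = (1 : FrobA a h) ⊗ₜ[R] FrobX a h + FrobX a h ⊗ₜ[R] (1 : FrobA a h)
      - h • ((1 : FrobA a h) ⊗ₜ[R] (1 : FrobA a h)))
    (hΔX : ΔC (FrobX a h) = FrobX a h ⊗ₜ[R] FrobX a h
      + a • ((1 : FrobA a h) ⊗ₜ[R] (1 : FrobA a h)))
    (εC εW : FrobA a h →ₗ[R] R)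
    (hεC1 : εC 1 = 0) (hεCX : εC (FrobX a h) = 1)
    (hεW1 : εW 1 = 0) (hεWX : εW (FrobX a h) = -i)
    (z1 z1s : FrobA a h →ₗ[R] FrobA a h)
    (hz1 : z1 = LinearMap.id)
    (hz1s : ∀ x : FrobA a h, z1s x = (-i) • x) :
    ∀ x : FrobA a h,
      x = (i * ⅟(2 : R) * εC (LinearMap.mul' R (FrobA a h) (ΔC (z1s x)))) • (1 : FrobA a h)
        + (i * ⅟(2 : R) * εW x) • z1 (LinearMap.mul' R (FrobA a h) (ΔC 1)) := by
  intro x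
  obtain ⟨p, q, rfl⟩ := AdjoinRoot.exists_eq_smul_one_add_smul_root_of_quadratic a h x
  have hmΔ1 : LinearMap.mul' R (FrobA a h) (ΔC 1) = (2 : R) • FrobX a h - h • 1 := by
    rw [hΔ1]
    simp only [map_add, map_sub, map_smul, LinearMap.mul'_apply, one_mul, mul_one]
    module
  have hmΔX :
      LinearMap.mul' R (FrobA a h) (ΔC (FrobX a h)) = h • FrobX a h + (2 * a) • 1 := by
    rw [hΔX]
    simp only [map_add, map_smul, LinearMap.mul'_apply, mul_one]
    rw [← sq, AdjoinRoot.root_sq_eq_of_quadratic]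
    module
  subst hz1
  simp only [hz1s, smul_add, map_add, map_smul, map_sub, hmΔ1, hmΔX, hεC1, hεCX, hεW1, hεWX,
    LinearMap.id_apply, smul_eq_mul, mul_zero, mul_one, smul_smul]
  match_scalars
  · linear_combination (2 * p * ⅟(2 : R)) * hi - p * invOf_mul_self (2 : R)
  · linear_combination (2 * q * ⅟(2 : R)) * hi - q * invOf_mul_self (2 : R)

end
end

section
/- Both trace pairings are unimodular: the R-bilinear form B_C(x, y) = ε_C(x·y) on A induces an R-module isomorphism A → Hom_R(A, R), x ↦ B_C(x, −), and likewise the R-bilinear form B_W(x, y) = ε_W(x·y) induces an R-module isomorphism A → Hom_R(A, R); hence the comultiplications dual to the multiplication via ε_C and ε_W are well defined. -/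
open TensorProduct Polynomial

noncomputable section

variable {R : Type*} [CommRing R]

/-! In the basis `1, X` of `A`, the Gram matrix of `(x, y) ↦ ε (x * y)` is
`!![ε 1, ε X; ε X, ε (X * X)]`, whose determinant is `-(ε X) ^ 2` once `ε 1 = 0`. This is a unit
for `ε_C` (`ε_C X = 1`) and for `ε_W` (`(-i) * i = 1`), and a bilinear form on a finite free module
whose Gram determinant is a unit identifies the module with its dual. -/

open Function Module

theorem LinearMap.bijective_of_isUnit_det_toMatrix₂ {M ι : Type*} [AddCommGroup M] [Module R M]
    [Fintype ι] [DecidableEq ι] (b : Basis ι R M) (B : M →ₗ[R] M →ₗ[R] R)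
    (hB : IsUnit (LinearMap.toMatrix₂ b b B).det) : Bijective B := by
  have hT : LinearMap.toMatrix b b.dualBasis B = (LinearMap.toMatrix₂ b b B).transpose := by
    ext i j
    simp [LinearMap.toMatrix_apply, LinearMap.toMatrix₂_apply]
  rw [← Matrix.det_transpose, ← hT] at hB
  exact (LinearEquiv.ofIsUnitDet hB).bijective

theorem bijective_mul_compr₂_of_basis_fin_two {A : Type*} [Ring A] [Algebra R A]
    (b : Basis (Fin 2) R A) (hb : b 0 = 1) (ε : A →ₗ[R] R) (hε : ε 1 = 0)
    (hu : IsUnit (ε (b 1))) : Bijective ((LinearMap.mul R A).compr₂ ε) := by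
  refine LinearMap.bijective_of_isUnit_det_toMatrix₂ b _ ?_
  have hdet : (LinearMap.toMatrix₂ b b ((LinearMap.mul R A).compr₂ ε)).det = -ε (b 1) ^ 2 := by
    simp only [Matrix.det_fin_two, LinearMap.toMatrix₂_apply, LinearMap.compr₂_apply,
      LinearMap.mul_apply_apply, hb, hε, mul_one, one_mul, zero_mul]
    ring
  rw [hdet]
  exact (hu.pow 2).neg

theorem FrobA.exists_basis [Nontrivial R] (a h : R) :
    ∃ b : Basis (Fin 2) R (FrobA a h), b 0 = 1 ∧ b 1 = FrobX a h := by
  have hmonic : (X ^ 2 - C h * X - C a : R[X]).Monic := by monicity!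
  have hdeg : (X ^ 2 - C h * X - C a : R[X]).natDegree = 2 := by compute_degree!
  refine ⟨(AdjoinRoot.powerBasis' hmonic).basis.reindex (finCongr hdeg), ?_, ?_⟩ <;>
    simp only [Basis.reindex_apply, PowerBasis.coe_basis]
  exacts [pow_zero _, pow_one _]

theorem FrobA.bijective_pairing (a h : R) (ε : FrobA a h →ₗ[R] R) (hε1 : ε 1 = 0)
    (hεX : IsUnit (ε (FrobX a h))) : Bijective ((LinearMap.mul R (FrobA a h)).compr₂ ε) := by
  cases subsingleton_or_nontrivial R
  · have : Subsingleton (FrobA a h) := Module.subsingleton R _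
    exact ⟨fun _ _ _ => Subsingleton.elim _ _, fun _ => ⟨0, Subsingleton.elim _ _⟩⟩
  obtain ⟨b, hb0, hb1⟩ := FrobA.exists_basis a h
  exact bijective_mul_compr₂_of_basis_fin_two b hb0 ε hε1 (hb1 ▸ hεX)

/-- both trace pairings `B_C(x,y) = ε_C(x·y)` and `B_W(x,y) = ε_W(x·y)` are
unimodular: each induces an `R`-module isomorphism `A ≅ Hom_R(A, R)`. -/
theorem trace_pairings_unimodular (a h i : R) (hi : i ^ 2 = -1)
    (εC εW : FrobA a h →ₗ[R] R)
    (hεC1 : εC 1 = 0) (hεCX : εC (FrobX a h) = 1)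
    (hεW1 : εW 1 = 0) (hεWX : εW (FrobX a h) = -i) :
    (∃ e : FrobA a h ≃ₗ[R] Module.Dual R (FrobA a h),
      ∀ x y : FrobA a h, e x y = εC (x * y)) ∧
    (∃ e : FrobA a h ≃ₗ[R] Module.Dual R (FrobA a h),
      ∀ x y : FrobA a h, e x y = εW (x * y)) := by
  have hi_unit : IsUnit (-i) := IsUnit.of_mul_eq_one i (by linear_combination -hi)
  exact ⟨⟨.ofBijective _ (FrobA.bijective_pairing a h εC hεC1 (hεCX ▸ isUnit_one)),
      fun _ _ => rfl⟩,
    ⟨.ofBijective _ (FrobA.bijective_pairing a h εW hεW1 (hεWX ▸ hi_unit)), fun _ _ => rfl⟩⟩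

end
end
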